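/- For any m ∈ ℕ and any weights α_{1,j}, α_{2,j} ≥ 0 (j = 1,…,m), the set Λ = Λ₀ ∪ (Λ₁ × ℝ) ∪ (ℝ × Λ₂) is a closed subset of ℝ² with zero two-dimensional Lebesgue measure. -/

import Mathlib

/-! The involutions `reflFst`, `reflSnd` exchanging the two points of the ellipse `Γ` on a
horizontal, resp. vertical, line generate a group of order six, and the six distinguished points
are the orbit of the origin. A rule with `m = 0` (or `n = 0`) replaces a point of `Λ_{α₁,α₂}` by
one of its reflections, while a rule with `m ≥ 1` raises the coordinate sum by at least `2`. As
the coordinate sum is bounded on `Γ`, boundedly many rounds of "take the finitely many steps, then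
close under the reflections", started at the origin, exhaust `Λ_{α₁,α₂}`, which is therefore
finite. Hence `Λ₀` is a finite union of translates of `4π ℕ²` and `Λᵢ` a finite union of
translates of `4π ℕ`: these sets are closed and countable, and `Λ` is null. -/

/-- The subset `Γ_{α₁,α₂}` of an ellipse in `ℝ²`. -/
def GammaSet (a1 a2 : ℝ) : Set (ℝ × ℝ) :=
  {s | 0 ≤ s.1 ∧ 0 ≤ s.2 ∧
    s.1 ^ 2 - s.1 * s.2 + s.2 ^ 2 = 2 * (1 + a1) * s.1 + 2 * (1 + a2) * s.2}

/-- Membership in `Λ_{α₁,α₂}`: the smallest subset of `Γ_{α₁,α₂}` containing the six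
distinguished points and closed under the two horizontal/vertical propagation rules. -/
inductive LambdaMem (a1 a2 : ℝ) : ℝ × ℝ → Prop
  | pt₀ : LambdaMem a1 a2 (0, 0)
  | pt₁ : LambdaMem a1 a2 (2 * (1 + a1), 0)
  | pt₂ : LambdaMem a1 a2 (0, 2 * (1 + a2))
  | pt₃ : LambdaMem a1 a2 (2 * (1 + a1), 2 * (2 + a1 + a2))
  | pt₄ : LambdaMem a1 a2 (2 * (2 + a1 + a2), 2 * (1 + a2))
  | pt₅ : LambdaMem a1 a2 (2 * (2 + a1 + a2), 2 * (2 + a1 + a2))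
  | rule₂ (a b c d : ℝ) (m : ℕ) : LambdaMem a1 a2 (a, b) → (c, d) ∈ GammaSet a1 a2 →
      c = a + 2 * m → b ≤ d → LambdaMem a1 a2 (c, d)
  | rule₃ (a b c d : ℝ) (n : ℕ) : LambdaMem a1 a2 (a, b) → (c, d) ∈ GammaSet a1 a2 →
      d = b + 2 * n → a ≤ c → LambdaMem a1 a2 (c, d)

/-- The set `Λ_{α₁,α₂}`. -/
def LambdaSet (a1 a2 : ℝ) : Set (ℝ × ℝ) := {p | LambdaMem a1 a2 p}

/-- The set `Λ₀ = 2π { (2p,2q) + ∑ⱼ nⱼ (aⱼ,bⱼ) : p,q ∈ ℕ∪{0}, nⱼ ∈ {0,1},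
(aⱼ,bⱼ) ∈ Λ_{α_{1,j},α_{2,j}} }`. -/
def LambdaZero (m : ℕ) (a1 a2 : Fin m → ℝ) : Set (ℝ × ℝ) :=
  {z | ∃ (p q : ℕ) (n : Fin m → ℕ) (ab : Fin m → ℝ × ℝ),
    (∀ j, n j = 0 ∨ n j = 1) ∧ (∀ j, ab j ∈ LambdaSet (a1 j) (a2 j)) ∧
      z = (2 * Real.pi) • (((2 * p : ℝ), (2 * q : ℝ)) + ∑ j, (n j : ℝ) • ab j)}

/-- The set `Λᵢ = 4π { n + ∑ⱼ (1+α_{i,j}) nⱼ : n ∈ ℕ∪{0}, nⱼ ∈ {0,1} }` for weights `α_{i,j}`. -/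
def LambdaI (m : ℕ) (a : Fin m → ℝ) : Set ℝ :=
  {x | ∃ (n : ℕ) (nj : Fin m → ℕ), (∀ j, nj j = 0 ∨ nj j = 1) ∧
    x = 4 * Real.pi * ((n : ℝ) + ∑ j, (1 + a j) * (nj j : ℝ))}

open Set MeasureTheory Pointwise

lemma finite_setOf_add_two_mul_le (x B : ℝ) : {m : ℕ | x + 2 * m ≤ B}.Finite :=
  (finite_le_nat ⌊(B - x) / 2⌋₊).subset fun m (hm : x + 2 * m ≤ B) => Nat.le_floor (by linarith)

lemma isClosed_add_smul {G₀ E : Type*} [GroupWithZero G₀] [AddGroup E] [TopologicalSpace E]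
    [IsTopologicalAddGroup E] [MulAction G₀ E] [ContinuousConstSMul G₀ E] {D L : Set E}
    (hD : D.Finite) (hL : IsClosed L) {r : G₀} (hr : r ≠ 0) : IsClosed (D + r • L) :=
  (hL.smul_of_ne_zero hr).add_left_of_isCompact hD.isCompact

lemma countable_add_smul {M α : Type*} [Add α] [SMul M α] {D L : Set α} (hD : D.Countable)
    (hL : L.Countable) (r : M) : (D + r • L).Countable := by
  rw [← image2_add, ← image_smul]
  exact hD.image2 (hL.image _) _

namespace LambdaSet

variable {a1 a2 : ℝ}

def ellipse (a1 a2 : ℝ) : Set (ℝ × ℝ) :=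
  {p | p.1 ^ 2 - p.1 * p.2 + p.2 ^ 2 = 2 * (1 + a1) * p.1 + 2 * (1 + a2) * p.2}

lemma mem_ellipse {p : ℝ × ℝ} :
    p ∈ ellipse a1 a2 ↔ p.1 ^ 2 - p.1 * p.2 + p.2 ^ 2 = 2 * (1 + a1) * p.1 + 2 * (1 + a2) * p.2 :=
  Iff.rfl

-- By Vieta, the other point of `ellipse a1 a2` on the horizontal (resp. vertical) line through `p`.
def reflFst (a1 : ℝ) (p : ℝ × ℝ) : ℝ × ℝ := (p.2 + 2 * (1 + a1) - p.1, p.2)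

def reflSnd (a2 : ℝ) (p : ℝ × ℝ) : ℝ × ℝ := (p.1, p.1 + 2 * (1 + a2) - p.2)

@[simp]
lemma reflFst_reflFst (p : ℝ × ℝ) : reflFst a1 (reflFst a1 p) = p := by
  ext <;> simp only [reflFst]; ring

@[simp]
lemma reflSnd_reflSnd (p : ℝ × ℝ) : reflSnd a2 (reflSnd a2 p) = p := by
  ext <;> simp only [reflSnd]; ring

lemma reflFst_reflSnd_reflFst (p : ℝ × ℝ) :
    reflFst a1 (reflSnd a2 (reflFst a1 p)) = reflSnd a2 (reflFst a1 (reflSnd a2 p)) := by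
  ext <;> simp only [reflFst, reflSnd] <;> ring

lemma eq_or_eq_reflFst_of_snd_eq {p q : ℝ × ℝ} (hp : p ∈ ellipse a1 a2) (hq : q ∈ ellipse a1 a2)
    (h : q.2 = p.2) : q = p ∨ q = reflFst a1 p := by
  rw [mem_ellipse] at hp
  rw [mem_ellipse, h] at hq
  have : (q.1 - p.1) * (q.1 + p.1 - p.2 - 2 * (1 + a1)) = 0 := by linear_combination hq - hp
  rcases mul_eq_zero.1 this with h' | h'
  · exact Or.inl (Prod.ext (by linarith) h)
  · exact Or.inr (Prod.ext (by simp only [reflFst]; linarith) h)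

lemma eq_or_eq_reflSnd_of_fst_eq {p q : ℝ × ℝ} (hp : p ∈ ellipse a1 a2) (hq : q ∈ ellipse a1 a2)
    (h : q.1 = p.1) : q = p ∨ q = reflSnd a2 p := by
  rw [mem_ellipse] at hp
  rw [mem_ellipse, h] at hq
  have : (q.2 - p.2) * (q.2 + p.2 - p.1 - 2 * (1 + a2)) = 0 := by linear_combination hq - hp
  rcases mul_eq_zero.1 this with h' | h'
  · exact Or.inl (Prod.ext h (by linarith))
  · exact Or.inr (Prod.ext h (by simp only [reflSnd]; linarith))

lemma finite_ellipse_snd_eq (d : ℝ) : {q ∈ ellipse a1 a2 | q.2 = d}.Finite := by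
  rcases {q ∈ ellipse a1 a2 | q.2 = d}.eq_empty_or_nonempty with h | ⟨p, hp, rfl⟩
  · exact h ▸ finite_empty
  · exact (toFinite {p, reflFst a1 p}).subset fun q ⟨hq, hqp⟩ =>
      eq_or_eq_reflFst_of_snd_eq hp hq hqp

lemma finite_ellipse_fst_eq (c : ℝ) : {q ∈ ellipse a1 a2 | q.1 = c}.Finite := by
  rcases {q ∈ ellipse a1 a2 | q.1 = c}.eq_empty_or_nonempty with h | ⟨p, hp, rfl⟩
  · exact h ▸ finite_empty
  · exact (toFinite {p, reflSnd a2 p}).subset fun q ⟨hq, hqp⟩ =>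
      eq_or_eq_reflSnd_of_fst_eq hp hq hqp

lemma _root_.GammaSet.fst_add_snd_le (h1 : -1 ≤ a1) (h2 : -1 ≤ a2) {p : ℝ × ℝ}
    (hp : p ∈ GammaSet a1 a2) : p.1 + p.2 ≤ 8 * (2 + a1 + a2) := by
  obtain ⟨hx, hy, he⟩ := hp
  nlinarith [sq_nonneg (p.1 - p.2), mul_nonneg hx hy, mul_nonneg (neg_le_iff_add_nonneg'.1 h1) hy,
    mul_nonneg (neg_le_iff_add_nonneg'.1 h2) hx]

lemma _root_.LambdaMem.mem_gammaSet (h1 : -1 ≤ a1) (h2 : -1 ≤ a2) {p : ℝ × ℝ}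
    (hp : LambdaMem a1 a2 p) : p ∈ GammaSet a1 a2 := by
  induction hp with
  | rule₂ _ _ _ _ _ _ hcd => exact hcd
  | rule₃ _ _ _ _ _ _ hcd => exact hcd
  | _ => refine ⟨?_, ?_, ?_⟩ <;> simp only <;> linarith

def steps (a1 a2 : ℝ) (p : ℝ × ℝ) : Set (ℝ × ℝ) :=
  {q ∈ GammaSet a1 a2 | ∃ m : ℕ, q.1 = p.1 + 2 * m ∨ q.2 = p.2 + 2 * m}

lemma finite_steps (h1 : -1 ≤ a1) (h2 : -1 ≤ a2) (p : ℝ × ℝ) : (steps a1 a2 p).Finite := by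
  set B := 8 * (2 + a1 + a2)
  have hfst : (⋃ m ∈ {m : ℕ | p.1 + 2 * m ≤ B}, {q ∈ ellipse a1 a2 | q.1 = p.1 + 2 * m}).Finite :=
    (finite_setOf_add_two_mul_le _ _).biUnion fun m _ => finite_ellipse_fst_eq _
  have hsnd : (⋃ m ∈ {m : ℕ | p.2 + 2 * m ≤ B}, {q ∈ ellipse a1 a2 | q.2 = p.2 + 2 * m}).Finite :=
    (finite_setOf_add_two_mul_le _ _).biUnion fun m _ => finite_ellipse_snd_eq _
  refine (hfst.union hsnd).subset ?_
  rintro q ⟨hq, m, hm | hm⟩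
  all_goals have hB : q.1 + q.2 ≤ B := GammaSet.fst_add_snd_le h1 h2 hq
  · exact Or.inl (mem_biUnion (show p.1 + 2 * m ≤ B by linarith [hq.2.1]) ⟨hq.2.2, hm⟩)
  · exact Or.inr (mem_biUnion (show p.2 + 2 * m ≤ B by linarith [hq.1]) ⟨hq.2.2, hm⟩)

-- The six points listed form the orbit of `p` under the group generated by `reflFst a1` and
-- `reflSnd a2`: both are involutions and they satisfy the braid relation `reflFst_reflSnd_reflFst`.
def reflClosure (a1 a2 : ℝ) (S : Set (ℝ × ℝ)) : Set (ℝ × ℝ) :=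
  ⋃ p ∈ S, {p, reflSnd a2 p, reflFst a1 p, reflSnd a2 (reflFst a1 p), reflFst a1 (reflSnd a2 p),
    reflSnd a2 (reflFst a1 (reflSnd a2 p))}

lemma finite_reflClosure {S : Set (ℝ × ℝ)} (hS : S.Finite) : (reflClosure a1 a2 S).Finite :=
  hS.biUnion fun _ _ => toFinite _

lemma subset_reflClosure (S : Set (ℝ × ℝ)) : S ⊆ reflClosure a1 a2 S :=
  fun p hp => mem_biUnion hp (mem_insert p _)

lemma reflFst_mem_reflClosure {S : Set (ℝ × ℝ)} {q : ℝ × ℝ} (hq : q ∈ reflClosure a1 a2 S) :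
    reflFst a1 q ∈ reflClosure a1 a2 S := by
  obtain ⟨p, hp, hq⟩ := mem_iUnion₂.1 hq
  refine mem_biUnion hp ?_
  rcases hq with rfl | rfl | rfl | rfl | rfl | rfl <;> simp [reflFst_reflSnd_reflFst]

lemma reflSnd_mem_reflClosure {S : Set (ℝ × ℝ)} {q : ℝ × ℝ} (hq : q ∈ reflClosure a1 a2 S) :
    reflSnd a2 q ∈ reflClosure a1 a2 S := by
  obtain ⟨p, hp, hq⟩ := mem_iUnion₂.1 hq
  refine mem_biUnion hp ?_
  rcases hq with rfl | rfl | rfl | rfl | rfl | rfl <;> simp [← reflFst_reflSnd_reflFst]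

def level (a1 a2 : ℝ) : ℕ → Set (ℝ × ℝ)
  | 0 => reflClosure a1 a2 {0}
  | k + 1 => level a1 a2 k ∪ reflClosure a1 a2 (⋃ p ∈ level a1 a2 k, steps a1 a2 p)

lemma finite_level (h1 : -1 ≤ a1) (h2 : -1 ≤ a2) (k : ℕ) : (level a1 a2 k).Finite := by
  induction k with
  | zero => exact finite_reflClosure (finite_singleton 0)
  | succ k ih => exact ih.union (finite_reflClosure (ih.biUnion fun p _ => finite_steps h1 h2 p))

lemma monotone_level : Monotone (level a1 a2) :=
  monotone_nat_of_le_succ fun _ => subset_union_left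

lemma reflFst_mem_level {k : ℕ} {q : ℝ × ℝ} (hq : q ∈ level a1 a2 k) :
    reflFst a1 q ∈ level a1 a2 k := by
  induction k with
  | zero => exact reflFst_mem_reflClosure hq
  | succ k ih => exact hq.imp ih reflFst_mem_reflClosure

lemma reflSnd_mem_level {k : ℕ} {q : ℝ × ℝ} (hq : q ∈ level a1 a2 k) :
    reflSnd a2 q ∈ level a1 a2 k := by
  induction k with
  | zero => exact reflSnd_mem_reflClosure hq
  | succ k ih => exact hq.imp ih reflSnd_mem_reflClosure

lemma zero_mem_level (k : ℕ) : ((0 : ℝ), (0 : ℝ)) ∈ level a1 a2 k :=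
  monotone_level (Nat.zero_le k) (subset_reflClosure _ rfl)

lemma mem_level_succ_of_mem_steps {k : ℕ} {p q : ℝ × ℝ} (hp : p ∈ level a1 a2 k)
    (hq : q ∈ steps a1 a2 p) : q ∈ level a1 a2 (k + 1) :=
  Or.inr (subset_reflClosure _ (mem_biUnion hp hq))

lemma mem_level_of_step {a b c d : ℝ} {m k : ℕ} (hab : (a, b) ∈ GammaSet a1 a2)
    (hcd : (c, d) ∈ GammaSet a1 a2) (hac : a ≤ c) (hbd : b ≤ d)
    (hstep : c = a + 2 * m ∨ d = b + 2 * m)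
    (ih : ∀ {k : ℕ}, a + b ≤ 2 * k → (a, b) ∈ level a1 a2 k) (hk : c + d ≤ 2 * k) :
    (c, d) ∈ level a1 a2 k := by
  rcases m.eq_zero_or_pos with rfl | hm
  · have hab' := ih (k := k) (by linarith)
    simp only [Nat.cast_zero, mul_zero, add_zero] at hstep
    rcases hstep with rfl | rfl
    · rcases eq_or_eq_reflSnd_of_fst_eq hab.2.2 hcd.2.2 rfl with h | h <;> rw [h]
      exacts [hab', reflSnd_mem_level hab']
    · rcases eq_or_eq_reflFst_of_snd_eq hab.2.2 hcd.2.2 rfl with h | h <;> rw [h]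
      exacts [hab', reflFst_mem_level hab']
  · have hm : (1 : ℝ) ≤ m := by exact_mod_cast hm
    have hsum : a + b + 2 ≤ c + d := by rcases hstep with h | h <;> linarith
    have hk0 : (0 : ℝ) < k := by linarith [hab.1, hab.2.1]
    obtain ⟨k, rfl⟩ : ∃ k', k = k' + 1 := Nat.exists_eq_add_one.2 (by exact_mod_cast hk0)
    push_cast at hk
    exact mem_level_succ_of_mem_steps (ih (by linarith)) ⟨hcd, m, hstep⟩

lemma _root_.LambdaMem.mem_level (h1 : -1 ≤ a1) (h2 : -1 ≤ a2) {p : ℝ × ℝ}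
    (hp : LambdaMem a1 a2 p) {k : ℕ} (hk : p.1 + p.2 ≤ 2 * k) : p ∈ level a1 a2 k := by
  induction hp generalizing k with
  | rule₂ a b c d m hab hcd hc hbd ih =>
    have hac : a ≤ c := hc ▸ le_add_of_nonneg_right (by positivity)
    exact mem_level_of_step (hab.mem_gammaSet h1 h2) hcd hac hbd (Or.inl hc) ih hk
  | rule₃ a b c d n hab hcd hd hac ih =>
    have hbd : b ≤ d := hd ▸ le_add_of_nonneg_right (by positivity)
    exact mem_level_of_step (hab.mem_gammaSet h1 h2) hcd hac hbd (Or.inr hd) ih hk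
  | pt₀ => exact zero_mem_level k
  | pt₁ => convert reflFst_mem_level (zero_mem_level k) using 1; ext <;> simp [reflFst]
  | pt₂ => convert reflSnd_mem_level (zero_mem_level k) using 1; ext <;> simp [reflSnd]
  | pt₃ =>
    convert reflSnd_mem_level (reflFst_mem_level (zero_mem_level k)) using 1
    ext <;> simp only [reflFst, reflSnd] <;> ring
  | pt₄ =>
    convert reflFst_mem_level (reflSnd_mem_level (zero_mem_level k)) using 1
    ext <;> simp only [reflFst, reflSnd] <;> ring
  | pt₅ =>
    convert reflSnd_mem_level (reflFst_mem_level (reflSnd_mem_level (zero_mem_level k))) using 1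
    ext <;> simp only [reflFst, reflSnd] <;> ring

theorem finite (h1 : -1 ≤ a1) (h2 : -1 ≤ a2) : (LambdaSet a1 a2).Finite := by
  refine (finite_level h1 h2 ⌈4 * (2 + a1 + a2)⌉₊).subset fun p hp => hp.mem_level h1 h2 ?_
  have := GammaSet.fst_add_snd_le h1 h2 (hp.mem_gammaSet h1 h2)
  have := Nat.le_ceil (4 * (2 + a1 + a2))
  linarith

end LambdaSet

def binaryVectors (m : ℕ) : Set (Fin m → ℕ) := {n | ∀ j, n j = 0 ∨ n j = 1}

lemma finite_binaryVectors (m : ℕ) : (binaryVectors m).Finite :=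
  Finite.pi' fun _ => toFinite {0, 1}

def lambdaIOffsets (m : ℕ) (a : Fin m → ℝ) : Set ℝ :=
  (fun n : Fin m → ℕ => 4 * Real.pi * ∑ j, (1 + a j) * (n j : ℝ)) '' binaryVectors m

lemma LambdaI_eq_add (m : ℕ) (a : Fin m → ℝ) :
    LambdaI m a = lambdaIOffsets m a + (4 * Real.pi) • range ((↑) : ℕ → ℝ) := by
  ext x
  constructor
  · rintro ⟨n, nj, hnj, rfl⟩
    exact ⟨_, ⟨nj, hnj, rfl⟩, _, ⟨n, ⟨n, rfl⟩, rfl⟩, by simp only [smul_eq_mul]; ring⟩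
  · rintro ⟨_, ⟨nj, hnj, rfl⟩, _, ⟨_, ⟨n, rfl⟩, rfl⟩, rfl⟩
    exact ⟨n, nj, hnj, by simp only [smul_eq_mul]; ring⟩

lemma isClosed_LambdaI (m : ℕ) (a : Fin m → ℝ) : IsClosed (LambdaI m a) := by
  rw [LambdaI_eq_add]
  exact isClosed_add_smul ((finite_binaryVectors m).image _)
    Nat.isClosedEmbedding_coe_real.isClosed_range (by positivity)

lemma countable_LambdaI (m : ℕ) (a : Fin m → ℝ) : (LambdaI m a).Countable := by
  rw [LambdaI_eq_add]
  exact countable_add_smul ((finite_binaryVectors m).image _).countable (countable_range _) _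

def lambdaZeroOffsets (m : ℕ) (a1 a2 : Fin m → ℝ) : Set (ℝ × ℝ) :=
  (fun x : (Fin m → ℕ) × (Fin m → ℝ × ℝ) => (2 * Real.pi) • ∑ j, (x.1 j : ℝ) • x.2 j) ''
    (binaryVectors m ×ˢ {ab | ∀ j, ab j ∈ LambdaSet (a1 j) (a2 j)})

lemma LambdaZero_eq_add (m : ℕ) (a1 a2 : Fin m → ℝ) :
    LambdaZero m a1 a2 = lambdaZeroOffsets m a1 a2 +
      (4 * Real.pi) • (range ((↑) : ℕ → ℝ) ×ˢ range ((↑) : ℕ → ℝ)) := by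
  ext z
  constructor
  · rintro ⟨p, q, n, ab, hn, hab, rfl⟩
    refine ⟨_, ⟨(n, ab), ⟨hn, hab⟩, rfl⟩, _, ⟨((p : ℝ), (q : ℝ)), ⟨⟨p, rfl⟩, ⟨q, rfl⟩⟩, rfl⟩, ?_⟩
    ext <;> simp only [Prod.smul_mk, smul_eq_mul, Prod.fst_add, Prod.snd_add, Prod.smul_fst,
      Prod.smul_snd, smul_add] <;> ring
  · rintro ⟨_, ⟨⟨n, ab⟩, ⟨hn, hab⟩, rfl⟩, _, ⟨⟨_, _⟩, ⟨⟨p, rfl⟩, ⟨q, rfl⟩⟩, rfl⟩, rfl⟩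
    refine ⟨p, q, n, ab, hn, hab, ?_⟩
    ext <;> simp only [Prod.smul_mk, smul_eq_mul, Prod.fst_add, Prod.snd_add, Prod.smul_fst,
      Prod.smul_snd, smul_add] <;> ring

lemma finite_lambdaZeroOffsets {m : ℕ} {a1 a2 : Fin m → ℝ} (h1 : ∀ j, -1 ≤ a1 j)
    (h2 : ∀ j, -1 ≤ a2 j) : (lambdaZeroOffsets m a1 a2).Finite :=
  ((finite_binaryVectors m).prod (Finite.pi' fun j => LambdaSet.finite (h1 j) (h2 j))).image _

lemma isClosed_LambdaZero {m : ℕ} {a1 a2 : Fin m → ℝ} (h1 : ∀ j, -1 ≤ a1 j)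
    (h2 : ∀ j, -1 ≤ a2 j) : IsClosed (LambdaZero m a1 a2) := by
  rw [LambdaZero_eq_add]
  have hN := Nat.isClosedEmbedding_coe_real.isClosed_range
  exact isClosed_add_smul (finite_lambdaZeroOffsets h1 h2) (hN.prod hN) (by positivity)

lemma countable_LambdaZero {m : ℕ} {a1 a2 : Fin m → ℝ} (h1 : ∀ j, -1 ≤ a1 j)
    (h2 : ∀ j, -1 ≤ a2 j) : (LambdaZero m a1 a2).Countable := by
  rw [LambdaZero_eq_add]
  exact countable_add_smul (finite_lambdaZeroOffsets h1 h2).countable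
    ((countable_range _).prod (countable_range _)) _

/-- `Λ = Λ₀ ∪ (Λ₁ × ℝ) ∪ (ℝ × Λ₂)` is closed in `ℝ²` and has zero
two-dimensional Lebesgue measure. -/
theorem Lambda_closed_measure_zero (m : ℕ) (a1 a2 : Fin m → ℝ)
    (h1 : ∀ j, 0 ≤ a1 j) (h2 : ∀ j, 0 ≤ a2 j) :
    IsClosed (LambdaZero m a1 a2 ∪ (LambdaI m a1) ×ˢ (Set.univ : Set ℝ) ∪
        (Set.univ : Set ℝ) ×ˢ (LambdaI m a2)) ∧
      MeasureTheory.volume (LambdaZero m a1 a2 ∪ (LambdaI m a1) ×ˢ (Set.univ : Set ℝ) ∪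
        (Set.univ : Set ℝ) ×ˢ (LambdaI m a2)) = 0 := by
  have h1' : ∀ j, -1 ≤ a1 j := fun j => by linarith [h1 j]
  have h2' : ∀ j, -1 ≤ a2 j := fun j => by linarith [h2 j]
  refine ⟨((isClosed_LambdaZero h1' h2').union ((isClosed_LambdaI m a1).prod isClosed_univ)).union
    (isClosed_univ.prod (isClosed_LambdaI m a2)), ?_⟩
  refine measure_union_null
    (measure_union_null ((countable_LambdaZero h1' h2').measure_zero _) ?_) ?_
  · rw [Measure.volume_eq_prod, Measure.prod_prod, (countable_LambdaI m a1).measure_zero, zero_mul]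
  · rw [Measure.volume_eq_prod, Measure.prod_prod, (countable_LambdaI m a2).measure_zero, mul_zero]
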